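/- Let A be a commutative ℂ-algebra and Ω an A-module. Let m₁ : A × A → A, τ : A × Ω → Ω, τ' : Ω × A → Ω be ℂ-bilinear maps; on the dual-number extensions A[ε] = A ⊕ εA and Ω[ε] = Ω ⊕ εΩ (ε² = 0) define f•g := fg + ε·m₁(f,g), f•ω := fω + ε·τ(f,ω), ω•f := fω + ε·τ'(ω,f), extended ℂ[ε]-bilinearly. Assume • is associative on A[ε] and Ω[ε] is an A[ε]-bimodule: (f•g)•ω = f•(g•ω), (f•ω)•g = f•(ω•g), and (ω•f)•g = ω•(f•g) for all f,g ∈ A[ε], ω ∈ Ω[ε]. Define {f,g} := m₁(f,g) − m₁(g,f) and the preconnection ∇̂_f ω := τ(f,ω) − τ'(ω,f) (so f•ω − ω•f = ε·∇̂_f ω for f ∈ A, ω ∈ Ω). Then the preconnection satisfies the covariant-derivative Leibniz rule: ∇̂_f(g·ω) = {f,g}·ω + g·∇̂_f ω for all f,g ∈ A and ω ∈ Ω. -/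

import Mathlib

/-!
Compare the `ε`-components of the bimodule axioms on undeformed elements `f, g ∈ A`, `ω ∈ Ω`.
The middle associativity `(f•ω)•g = f•(ω•g)` expresses `τ(f, gω)` through `τ(f, ω)` and
`τ'(fω, g)`, and the right associativity `(ω•g)•f = ω•(g•f)` expresses `τ'(gω, f)` through
`m₁(g, f)` and `τ'(ω, gf)`. Substituting, the terms `τ'(ω, fg)` and `τ'(ω, gf)` cancel because
`A` is commutative, and what remains is the Leibniz rule.
-/

noncomputable section

namespace Semiclassical

variable {A : Type} [CommRing A] [Algebra ℂ A]
variable {Ω : Type} [AddCommGroup Ω] [Module A Ω] [Module ℂ Ω] [IsScalarTower ℂ A Ω]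

/-- The deformed product on the dual-number extension `A[ε] = A ⊕ εA`
(`ε² = 0`), encoded on pairs: ℂ[ε]-bilinear extension of
`f • g = fg + ε·m₁(f,g)`. -/
def bullet (m₁ : A →ₗ[ℂ] A →ₗ[ℂ] A) (x y : A × A) : A × A :=
  (x.1 * y.1, x.1 * y.2 + x.2 * y.1 + m₁ x.1 y.1)

/-- The deformed left action of `A[ε]` on `Ω[ε] = Ω ⊕ εΩ`: ℂ[ε]-bilinear
extension of `f • ω = fω + ε·τ(f,ω)`. -/
def lact (τ : A →ₗ[ℂ] Ω →ₗ[ℂ] Ω) (F : A × A) (W : Ω × Ω) : Ω × Ω :=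
  (F.1 • W.1, F.1 • W.2 + F.2 • W.1 + τ F.1 W.1)

/-- The deformed right action of `A[ε]` on `Ω[ε] = Ω ⊕ εΩ`: ℂ[ε]-bilinear
extension of `ω • f = fω + ε·τ'(ω,f)`. -/
def ract (τ' : Ω →ₗ[ℂ] A →ₗ[ℂ] Ω) (W : Ω × Ω) (F : A × A) : Ω × Ω :=
  (F.1 • W.1, F.1 • W.2 + F.2 • W.1 + τ' W.1 F.1)

section FirstOrder

variable (m₁ : A →ₗ[ℂ] A →ₗ[ℂ] A) (τ : A →ₗ[ℂ] Ω →ₗ[ℂ] Ω) (τ' : Ω →ₗ[ℂ] A →ₗ[ℂ] Ω)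

omit [IsScalarTower ℂ A Ω]

theorem bullet_inl_inl (f g : A) : bullet m₁ (f, 0) (g, 0) = (f * g, m₁ f g) := by
  simp [bullet]

theorem lact_inl_left (f : A) (W : Ω × Ω) :
    lact τ (f, 0) W = (f • W.1, f • W.2 + τ f W.1) := by
  simp [lact]

theorem ract_inl_right (W : Ω × Ω) (f : A) :
    ract τ' W (f, 0) = (f • W.1, f • W.2 + τ' W.1 f) := by
  simp [ract]

theorem ract_inl_left (ω : Ω) (F : A × A) :
    ract τ' (ω, 0) F = (F.1 • ω, F.2 • ω + τ' ω F.1) := by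
  simp [ract]

theorem tau_smul_of_middle_assoc
    (hmid : ∀ (F : A × A) (W : Ω × Ω) (G : A × A),
      ract τ' (lact τ F W) G = lact τ F (ract τ' W G))
    (f g : A) (ω : Ω) :
    τ f (g • ω) = g • τ f ω + τ' (f • ω) g - f • τ' ω g := by
  have h := congrArg Prod.snd (hmid (f, 0) (ω, 0) (g, 0))
  simp only [lact_inl_left, ract_inl_right, smul_zero, zero_add] at h
  rw [eq_sub_iff_add_eq, add_comm, ← h]

theorem tau'_smul_of_right_assoc
    (hright : ∀ (W : Ω × Ω) (F G : A × A),
      ract τ' (ract τ' W F) G = ract τ' W (bullet m₁ F G))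
    (f g : A) (ω : Ω) :
    τ' (g • ω) f = m₁ g f • ω + τ' ω (g * f) - f • τ' ω g := by
  have h := congrArg Prod.snd (hright (ω, 0) (g, 0) (f, 0))
  simp only [ract_inl_right, ract_inl_left, bullet_inl_inl, smul_zero, zero_add] at h
  rw [eq_sub_iff_add_eq, add_comm, h]

end FirstOrder

theorem preconnection_leibniz
    (m₁ : A →ₗ[ℂ] A →ₗ[ℂ] A) (τ : A →ₗ[ℂ] Ω →ₗ[ℂ] Ω) (τ' : Ω →ₗ[ℂ] A →ₗ[ℂ] Ω)
    (hmid : ∀ (F : A × A) (W : Ω × Ω) (G : A × A),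
      ract τ' (lact τ F W) G = lact τ F (ract τ' W G))
    (hright : ∀ (W : Ω × Ω) (F G : A × A),
      ract τ' (ract τ' W F) G = ract τ' W (bullet m₁ F G)) :
    ∀ (f g : A) (ω : Ω),
      τ f (g • ω) - τ' (g • ω) f =
        (m₁ f g - m₁ g f) • ω + g • (τ f ω - τ' ω f) := by
  intro f g ω
  rw [tau_smul_of_middle_assoc τ τ' hmid, tau'_smul_of_right_assoc m₁ τ' hright f g,
    tau'_smul_of_right_assoc m₁ τ' hright g f, mul_comm g f, sub_smul, smul_sub]
  abel

end Semiclassical
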